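/- arXiv:2111.05975 — 7 statements merged into one kernel-verified Lean document; each statement's English description precedes it below -/
import Mathlib

section
/- A subset B of a metric space (X,d) is Bourbaki-bounded in X if and only if every sequence in B has a Bourbaki-Cauchy subsequence in X. -/
/-!
If `B` is Bourbaki-bounded, fix a free ultrafilter on `ℕ`: for every radius `1/(k+1)` one of the
finitely many chain balls covering `B` contains `u n` for ultrafilter-almost all `n`, and a
diagonal extraction yields a subsequence that eventually lies in each of these chain balls.
Conversely, if for some `ε` no finite family of chain balls `chainBall x ε m` covers `B`, choose
inductively `v j ∈ B` outside the chain balls of length `j` around the earlier points. Two terms of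
a subsequence lying in a common `chainBall p ε m` are joined by a chain of length `2m + 1`, which
is impossible once the later index exceeds `2m + 1`.
-/

open Metric Filter Set

/-- Iterated chain-ball: `chainBall x eps m` is the set of points joinable to `x`
by a chain of `m + 1` steps each of length `< eps`; `chainBall x eps 0` is the open
ball (corresponding to `B^1`), and `chainBall x eps m` corresponds to `B^(m+1)`. -/
def chainBall {X : Type*} [PseudoMetricSpace X] (x : X) (eps : Real) : Nat -> Set X
  | 0 => Metric.ball x eps
  | m + 1 => Set.iUnion fun y : X => Set.iUnion fun _ : y ∈ chainBall x eps m => Metric.ball y eps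

/-- `B` is Bourbaki-bounded in `X`. -/
def IsBourbakiBounded {X : Type*} [PseudoMetricSpace X] (B : Set X) : Prop :=
  ∀ ε > (0 : ℝ), ∃ m : ℕ, ∃ s : Finset X, B ⊆ ⋃ x ∈ s, chainBall x ε m

/-- A sequence is Bourbaki-Cauchy in `X`. -/
def BourbakiCauchySeq {X : Type*} [PseudoMetricSpace X] (u : ℕ → X) : Prop :=
  ∀ ε > (0 : ℝ), ∃ m n₀ : ℕ, ∃ p : X, ∀ n ≥ n₀, u n ∈ chainBall p ε m

section ChainBall

variable {X : Type*} [PseudoMetricSpace X] {x y z : X} {ε ε' : ℝ} {m n : ℕ}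

theorem mem_chainBall_succ :
    z ∈ chainBall x ε (m + 1) ↔ ∃ y ∈ chainBall x ε m, z ∈ ball y ε := by
  simp [chainBall]

theorem chainBall_mono_radius (h : ε ≤ ε') (m : ℕ) : chainBall x ε m ⊆ chainBall x ε' m := by
  induction m with
  | zero => exact ball_subset_ball h
  | succ m ih =>
    rintro z hz
    obtain ⟨y, hy, hzy⟩ := mem_chainBall_succ.1 hz
    exact mem_chainBall_succ.2 ⟨y, ih hy, ball_subset_ball h hzy⟩

theorem chainBall_subset_succ : chainBall x ε m ⊆ chainBall x ε (m + 1) := by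
  intro z hz
  have hε : 0 < ε := by
    cases m with
    | zero => exact pos_of_mem_ball hz
    | succ m =>
      obtain ⟨y, -, hzy⟩ := mem_chainBall_succ.1 hz
      exact pos_of_mem_ball hzy
  exact mem_chainBall_succ.2 ⟨z, hz, mem_ball_self hε⟩

theorem monotone_chainBall : Monotone (chainBall x ε) :=
  monotone_nat_of_le_succ fun _ => chainBall_subset_succ

theorem mem_chainBall_trans (hy : y ∈ chainBall x ε m) (hz : z ∈ chainBall y ε n) :
    z ∈ chainBall x ε (m + n + 1) := by
  induction n generalizing z with
  | zero => exact mem_chainBall_succ.2 ⟨y, hy, hz⟩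
  | succ n ih =>
    obtain ⟨w, hw, hzw⟩ := mem_chainBall_succ.1 hz
    exact mem_chainBall_succ.2 ⟨w, ih hw, hzw⟩

theorem mem_chainBall_symm (h : y ∈ chainBall x ε m) : x ∈ chainBall y ε m := by
  induction m generalizing y with
  | zero => exact mem_ball_comm.1 h
  | succ m ih =>
    obtain ⟨w, hw, hyw⟩ := mem_chainBall_succ.1 h
    simpa using mem_chainBall_trans (m := 0) (mem_ball_comm.1 hyw) (ih hw)

end ChainBall

theorem exists_strictMono_forall_ge_of_eventually {l : Filter ℕ} [NeBot l] (hl : l ≤ atTop)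
    {Q : ℕ → ℕ → Prop} (h : ∀ k, ∀ᶠ n in l, Q k n) :
    ∃ φ : ℕ → ℕ, StrictMono φ ∧ ∀ k n, k ≤ n → Q k (φ n) := by
  have hfreq : ∀ n, ∃ᶠ j in atTop, ∀ k ∈ Iic n, Q k j := fun n =>
    ((finite_Iic n).eventually_all.2 fun k _ => h k).frequently.filter_mono hl
  obtain ⟨φ, hφ, hφQ⟩ := extraction_forall_of_frequently hfreq
  exact ⟨φ, hφ, fun k n hkn => hφQ n k hkn⟩

section Bourbaki

variable {X : Type*} [PseudoMetricSpace X] {B : Set X} {ε : ℝ}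

theorem IsBourbakiBounded.exists_eventually_mem_chainBall (hB : IsBourbakiBounded B)
    {ι : Type*} (𝒰 : Ultrafilter ι) {u : ι → X} (hu : ∀ i, u i ∈ B) (hε : 0 < ε) :
    ∃ p : X, ∃ m : ℕ, ∀ᶠ i in 𝒰, u i ∈ chainBall p ε m := by
  obtain ⟨m, s, hs⟩ := hB ε hε
  have hcover : ∀ᶠ i in 𝒰, ∃ x ∈ (s : Set X), u i ∈ chainBall x ε m :=
    Eventually.of_forall fun i => by simpa using hs (hu i)
  obtain ⟨p, -, hp⟩ := (Ultrafilter.eventually_exists_mem_iff s.finite_toSet).1 hcover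
  exact ⟨p, m, hp⟩

theorem exists_seq_forall_not_mem_chainBall
    (hε : ∀ (m : ℕ) (s : Finset X), ¬B ⊆ ⋃ x ∈ s, chainBall x ε m) :
    ∃ v : ℕ → X, (∀ n, v n ∈ B) ∧ ∀ i j m, i < j → m ≤ j → v j ∉ chainBall (v i) ε m := by
  classical
  -- the first coordinate records the chain length the new point has to escape
  obtain ⟨f, hfB, hf⟩ := exists_seq_of_forall_finset_exists (fun a : ℕ × X => a.2 ∈ B)
    (fun a b => a.1 < b.1 ∧ b.2 ∉ chainBall a.2 ε b.1) fun s _ => by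
      obtain ⟨y, hyB, hy⟩ := not_subset.1 (hε (s.sup Prod.fst + 1) (s.image Prod.snd))
      refine ⟨(s.sup Prod.fst + 1, y), hyB, fun a ha => ⟨Nat.lt_succ_of_le (s.le_sup ha), ?_⟩⟩
      exact fun hya => hy (mem_biUnion (Finset.mem_image_of_mem _ ha) hya)
  have hmono : StrictMono fun n => (f n).1 := fun i j hij => (hf i j hij).1
  refine ⟨fun n => (f n).2, hfB, fun i j m hij hmj hm => (hf i j hij).2 ?_⟩
  exact monotone_chainBall (hmj.trans (hmono.id_le j)) hm

theorem not_bourbakiCauchySeq_comp {v : ℕ → X} (hε : 0 < ε)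
    (hv : ∀ i j m, i < j → m ≤ j → v j ∉ chainBall (v i) ε m) {φ : ℕ → ℕ}
    (hφ : StrictMono φ) : ¬BourbakiCauchySeq (v ∘ φ) := by
  rintro hv'
  obtain ⟨m, n₀, p, hp⟩ := hv' ε hε
  let n₁ := n₀ + 2 * m + 1
  have hjoin : v (φ n₁) ∈ chainBall (v (φ n₀)) ε (m + m + 1) :=
    mem_chainBall_trans (mem_chainBall_symm (hp n₀ le_rfl)) (hp n₁ (by omega))
  exact hv _ _ _ (hφ (by omega)) ((by omega : m + m + 1 ≤ n₁).trans (hφ.id_le n₁)) hjoin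

end Bourbaki

/-- A subset of a metric space is Bourbaki-bounded iff every sequence in it has a
Bourbaki-Cauchy subsequence. -/
theorem isBourbakiBounded_iff_subseq (X : Type*) [MetricSpace X] (B : Set X) :
    IsBourbakiBounded B ↔
      ∀ u : ℕ → X, (∀ n, u n ∈ B) →
        ∃ φ : ℕ → ℕ, StrictMono φ ∧ BourbakiCauchySeq (u ∘ φ) := by
  constructor
  · intro hB u hu
    choose p m hpm using fun k : ℕ =>
      hB.exists_eventually_mem_chainBall (hyperfilter ℕ) hu (Nat.one_div_pos_of_nat (n := k))
    obtain ⟨φ, hφ, hφm⟩ := exists_strictMono_forall_ge_of_eventually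
      (hyperfilter_le_cofinite.trans Nat.cofinite_eq_atTop.le) hpm
    refine ⟨φ, hφ, fun ε hε => ?_⟩
    obtain ⟨k, hk⟩ := exists_nat_one_div_lt hε
    exact ⟨m k, k, p k, fun n hn => chainBall_mono_radius hk.le _ (hφm k n hn)⟩
  · intro h
    by_contra hB
    simp only [IsBourbakiBounded, not_forall, not_exists] at hB
    obtain ⟨ε, hε, hcover⟩ := hB
    obtain ⟨v, hvB, hv⟩ := exists_seq_forall_not_mem_chainBall hcover
    obtain ⟨φ, hφ, hφv⟩ := h v hvB
    exact not_bourbakiCauchySeq_comp hε hv hφ hφv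
end

section
/- A metric space (X,d) is Bourbaki-complete if and only if every Bourbaki-Cauchy sequence in X has a cluster point (i.e. sequential Bourbaki-completeness is equivalent to Bourbaki-completeness in metric spaces). -/
open Metric Filter Set Topology

/-- A metric space is (sequentially) Bourbaki-complete if every Bourbaki-Cauchy
sequence has a cluster point. -/
def IsBourbakiComplete (X : Type*) [PseudoMetricSpace X] : Prop :=
  ∀ u : ℕ → X, BourbakiCauchySeq u → ∃ x : X, MapClusterPt x atTop u

/-- A filter on a metric space is Bourbaki-Cauchy if for every `ε > 0` some chain-ball
belongs to the filter. -/
def BourbakiCauchyFilter {X : Type*} [PseudoMetricSpace X] (F : Filter X) : Prop :=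
  ∀ ε > (0 : ℝ), ∃ m : ℕ, ∃ p : X, chainBall p ε m ∈ F

section

variable {X : Type*} [PseudoMetricSpace X]

lemma chainBall_mono {x : X} {ε ε' : ℝ} (h : ε ≤ ε') (m : ℕ) :
    chainBall x ε m ⊆ chainBall x ε' m := by
  induction m with
  | zero => exact ball_subset_ball h
  | succ m ih =>
    simp only [chainBall, iUnion_subset_iff]
    exact fun y hy => (ball_subset_ball h).trans (subset_biUnion_of_mem (u := (ball · ε')) (ih hy))

lemma closure_chainBall_subset (x : X) {ε : ℝ} (hε : 0 < ε) (m : ℕ) :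
    closure (chainBall x ε m) ⊆ chainBall x ε (m + 1) := by
  intro z hz
  obtain ⟨y, hy, hzy⟩ := mem_closure_iff.1 hz ε hε
  simp only [chainBall, mem_iUnion]
  exact ⟨y, hy, mem_ball.2 hzy⟩

lemma BourbakiCauchySeq.bourbakiCauchyFilter_map {u : ℕ → X} (hu : BourbakiCauchySeq u) :
    BourbakiCauchyFilter (map u atTop) := fun ε hε => by
  obtain ⟨m, n₀, p, hp⟩ := hu ε hε
  exact ⟨m, p, eventually_atTop.2 ⟨n₀, hp⟩⟩

lemma bourbakiCauchySeq_of_eventually_mem_chainBall {u p : ℕ → X} {m : ℕ → ℕ}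
    (h : ∀ j : ℕ, ∀ᶠ n in atTop, u n ∈ chainBall (p j) (1 / (j + 1)) (m j)) :
    BourbakiCauchySeq u := fun ε hε => by
  obtain ⟨j, hj⟩ := exists_nat_one_div_lt hε
  obtain ⟨n₀, hn₀⟩ := eventually_atTop.1 (h j)
  exact ⟨m j, n₀, p j, fun n hn => chainBall_mono hj.le _ (hn₀ n hn)⟩

lemma IsBourbakiComplete.isCompact_iInter_closure_chainBall (hX : IsBourbakiComplete X)
    (p : ℕ → X) (m : ℕ → ℕ) :
    IsCompact (⋂ j : ℕ, closure (chainBall (p j) (1 / (j + 1)) (m j))) := by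
  refine IsSeqCompact.isCompact fun y hy => ?_
  have hy_cauchy : BourbakiCauchySeq y :=
    bourbakiCauchySeq_of_eventually_mem_chainBall (m := fun j => m j + 1) fun j =>
      .of_forall fun n => closure_chainBall_subset _ (by positivity) _ (mem_iInter.1 (hy n) j)
  obtain ⟨x, hx⟩ := hX y hy_cauchy
  obtain ⟨ψ, hψ, hψx⟩ := hx.tendsto_subseq
  have hK : IsClosed (⋂ j : ℕ, closure (chainBall (p j) (1 / (j + 1)) (m j))) :=
    isClosed_iInter fun _ => isClosed_closure
  exact ⟨x, hK.mem_of_tendsto hψx (.of_forall fun n => hy _), ψ, hψ, hψx⟩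

/-- With `C j ∈ F` a chain-ball of radius `1 / (j + 1)`, the set `K = ⋂ j, closure (C j)` is
compact, so it suffices that `F` meets every neighbourhood of `K`. Given `S ∈ F` and a
neighbourhood `U` of `K`, a sequence with `z k ∈ S ∩ C 0 ∩ ⋯ ∩ C k` is Bourbaki-Cauchy, and its
cluster point lies in `K`, so some `z k` lies in `U ∩ S`. -/
theorem IsBourbakiComplete.exists_clusterPt (hX : IsBourbakiComplete X) {F : Filter X}
    [F.NeBot] (hF : BourbakiCauchyFilter F) : ∃ x, ClusterPt x F := by
  choose m p hmem using fun j : ℕ => hF (1 / (j + 1)) (by positivity)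
  set C : ℕ → Set X := fun j => chainBall (p j) (1 / (j + 1)) (m j)
  set K := ⋂ j, closure (C j)
  have hK : IsCompact K := hX.isCompact_iInter_closure_chainBall p m
  suffices ¬Disjoint (𝓝ˢ K) F by
    simp only [hK.disjoint_nhdsSet_left, not_forall, exists_prop] at this
    obtain ⟨x, -, hx⟩ := this
    exact ⟨x, clusterPt_iff_not_disjoint.2 hx⟩
  rw [disjoint_iff, ← ne_eq, ← neBot_iff]
  refine inf_neBot_iff.2 fun U hU S hS => ?_
  choose z hzS hzC using fun k => Filter.nonempty_of_mem
    (inter_mem hS ((biInter_finset_mem (Finset.range (k + 1))).2 fun j _ => hmem j))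
  have hz : ∀ j, ∀ᶠ n in atTop, z n ∈ C j := fun j =>
    eventually_atTop.2 ⟨j, fun n hn => mem_iInter₂.1 (hzC n) j (Finset.mem_range_succ_iff.2 hn)⟩
  obtain ⟨x, hx⟩ := hX z (bourbakiCauchySeq_of_eventually_mem_chainBall hz)
  have hxK : x ∈ K := mem_iInter.2 fun j => hx.mem_closure_of_mem _ (hz j)
  obtain ⟨n, hn⟩ := (hx.frequently (mem_nhdsSet_iff_forall.1 hU x hxK)).exists
  exact ⟨z n, hn, hzS n⟩

end

/-- For metric spaces, Bourbaki-completeness (every Bourbaki-Cauchy filter clusters)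
is equivalent to sequential Bourbaki-completeness. -/
theorem bourbakiComplete_iff_seq (X : Type*) [MetricSpace X] :
    (∀ F : Filter X, F.NeBot → BourbakiCauchyFilter F → ∃ x : X, ClusterPt x F) ↔
      IsBourbakiComplete X :=
  ⟨fun h _ hu => h _ map_neBot hu.bourbakiCauchyFilter_map,
    fun hX _ _ hF => hX.exists_clusterPt hF⟩
end

section
/- A uniform space (X,μ) is uniformly locally compact if and only if it is cofinally complete and locally compact. -/
open Filter Set

/-- The star of a set `A` with respect to a family of sets. -/
def starSet {X : Type*} (U : Set (Set X)) (A : Set X) : Set X :=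
  ⋃ V ∈ {V ∈ U | (V ∩ A).Nonempty}, V

/-- Iterated star: `iterStar U A 0 = A`, `iterStar U A (m+1) = starSet U (iterStar U A m)`. -/
def iterStar {X : Type*} (U : Set (Set X)) (A : Set X) : ℕ → Set X
  | 0 => A
  | m + 1 => starSet U (iterStar U A m)

/-- A family of sets is a uniform cover of a uniform space if it is refined by the
cover of balls of some entourage. -/
def IsUniformCover {X : Type*} [UniformSpace X] (U : Set (Set X)) : Prop :=
  ∃ V ∈ uniformity X, ∀ x : X, ∃ W ∈ U, UniformSpace.ball x V ⊆ W

/-- A filter is cofinally Cauchy if for every uniform cover some member of the cover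
meets every member of the filter. -/
def CofinallyCauchyFilter {X : Type*} [UniformSpace X] (F : Filter X) : Prop :=
  ∀ U : Set (Set X), IsUniformCover U → ∃ W ∈ U, ∀ S ∈ F, (S ∩ W).Nonempty

/-- A uniform space is cofinally complete if every (proper) cofinally Cauchy filter
has a cluster point. -/
def CofinallyComplete (X : Type*) [UniformSpace X] : Prop :=
  ∀ F : Filter X, F.NeBot → CofinallyCauchyFilter F → ∃ x : X, ClusterPt x F

/-- A uniform space is uniformly locally compact if some uniform cover consists of
sets with compact closure. -/
def UniformlyLocallyCompact (X : Type*) [UniformSpace X] : Prop :=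
  ∃ U : Set (Set X), IsUniformCover U ∧ ∀ W ∈ U, IsCompact (closure W)

/-!
If `X` is not uniformly locally compact, then for every entourage `V` some closed ball of radius
`V` is not compact, hence meets every complement of a compact set; so the cocompact filter is
cofinally Cauchy. A locally compact space has no cluster point of the cocompact filter.
-/

open UniformSpace (ball ball_mem_nhds ball_mono isClosed_ball)

theorem WeaklyLocallyCompactSpace.of_exists_isCompact_closure {X : Type*} [TopologicalSpace X]
    (h : ∀ x : X, ∃ s ∈ nhds x, IsCompact (closure s)) : WeaklyLocallyCompactSpace X where
  exists_compact_mem_nhds x :=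
    let ⟨s, hs, hsc⟩ := h x
    ⟨closure s, hsc, mem_of_superset hs subset_closure⟩

theorem IsClosed.frequently_mem_cocompact {X : Type*} [TopologicalSpace X] {s : Set X}
    (hs : IsClosed s) (hsc : ¬IsCompact s) : ∃ᶠ x in cocompact X, x ∈ s := by
  intro hs'
  obtain ⟨t, ht, hst⟩ := mem_cocompact'.1 hs'
  exact hsc (ht.of_isClosed_subset hs fun _ hy => hst (not_not.2 hy))

section

variable {X : Type*} [UniformSpace X]

theorem isUniformCover_range_ball {V : Set (X × X)} (hV : V ∈ uniformity X) :
    IsUniformCover (range fun x => ball x V) :=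
  ⟨V, hV, fun x => ⟨ball x V, mem_range_self x, subset_rfl⟩⟩

theorem uniformlyLocallyCompact_iff_exists_isCompact_closure_ball :
    UniformlyLocallyCompact X ↔
      ∃ V ∈ uniformity X, ∀ x : X, IsCompact (closure (ball x V)) := by
  constructor
  · rintro ⟨U, ⟨V, hV, hUV⟩, hU⟩
    refine ⟨V, hV, fun x => ?_⟩
    obtain ⟨W, hW, hxW⟩ := hUV x
    exact (hU W hW).of_isClosed_subset isClosed_closure (closure_mono hxW)
  · rintro ⟨V, hV, hball⟩
    exact ⟨_, isUniformCover_range_ball hV, forall_mem_range.2 hball⟩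

theorem cofinallyCauchyFilter_iff_frequently {F : Filter X} :
    CofinallyCauchyFilter F ↔ ∀ U, IsUniformCover U → ∃ W ∈ U, ∃ᶠ x in F, x ∈ W := by
  simp only [CofinallyCauchyFilter, frequently_iff, Set.Nonempty, mem_inter_iff]

theorem CofinallyCauchyFilter.neBot {F : Filter X} (hF : CofinallyCauchyFilter F) : F.NeBot := by
  obtain ⟨W, -, hW⟩ :=
    cofinallyCauchyFilter_iff_frequently.1 hF _ (isUniformCover_range_ball univ_mem)
  exact (frequently_true_iff_neBot F).1 (hW.mono fun _ _ => trivial)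

theorem UniformlyLocallyCompact.cofinallyComplete (h : UniformlyLocallyCompact X) :
    CofinallyComplete X := by
  obtain ⟨V, hV, hball⟩ := uniformlyLocallyCompact_iff_exists_isCompact_closure_ball.1 h
  intro F _ hF
  obtain ⟨_, ⟨x, rfl⟩, hx⟩ :=
    cofinallyCauchyFilter_iff_frequently.1 hF _ (isUniformCover_range_ball hV)
  obtain ⟨y, -, hy⟩ :=
    (hball x).exists_clusterPt_of_frequently (hx.mono fun _ => (subset_closure ·))
  exact ⟨y, hy⟩

theorem UniformlyLocallyCompact.exists_mem_nhds_isCompact_closure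
    (h : UniformlyLocallyCompact X) (x : X) : ∃ s ∈ nhds x, IsCompact (closure s) := by
  obtain ⟨V, hV, hball⟩ := uniformlyLocallyCompact_iff_exists_isCompact_closure_ball.1 h
  exact ⟨ball x V, ball_mem_nhds x hV, hball x⟩

theorem cofinallyCauchyFilter_cocompact (h : ¬UniformlyLocallyCompact X) :
    CofinallyCauchyFilter (cocompact X) := by
  rw [uniformlyLocallyCompact_iff_exists_isCompact_closure_ball] at h
  push Not at h
  rw [cofinallyCauchyFilter_iff_frequently]
  rintro U ⟨V, hV, hUV⟩
  obtain ⟨V', ⟨hV', hV'c⟩, hV'V⟩ := uniformity_hasBasis_closed.mem_iff.1 hV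
  obtain ⟨x, hx⟩ := h V' hV'
  rw [(isClosed_ball x hV'c).closure_eq] at hx
  obtain ⟨W, hW, hxW⟩ := hUV x
  exact ⟨W, hW, ((isClosed_ball x hV'c).frequently_mem_cocompact hx).mono
    fun _ hy => hxW (ball_mono hV'V x hy)⟩

theorem CofinallyComplete.uniformlyLocallyCompact [WeaklyLocallyCompactSpace X]
    (h : CofinallyComplete X) : UniformlyLocallyCompact X := by
  by_contra hn
  have hF := cofinallyCauchyFilter_cocompact hn
  obtain ⟨x, hx⟩ := h _ hF.neBot hF
  exact clusterPt_iff_not_disjoint.1 hx (disjoint_nhds_cocompact x)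

end

/-- A uniform space is uniformly locally compact iff it is cofinally complete and
locally compact (every point has a neighborhood with compact closure). -/
theorem uniformlyLocallyCompact_iff (X : Type*) [UniformSpace X] :
    UniformlyLocallyCompact X ↔
      CofinallyComplete X ∧ ∀ x : X, ∃ s ∈ nhds x, IsCompact (closure s) := by
  refine ⟨fun h => ⟨h.cofinallyComplete, h.exists_mem_nhds_isCompact_closure⟩, ?_⟩
  rintro ⟨hcc, hlc⟩
  have := WeaklyLocallyCompactSpace.of_exists_isCompact_closure hlc
  exact hcc.uniformlyLocallyCompact
end

section
/- Let (X,d) be a metric space and (X̃,d̃) its completion. Then for every ε>0, y∈X̃ and m∈ℕ, the set B^m_{d̃}(y,ε/3)∩X is nonempty and there exists x_0∈X with B^m_{d̃}(y,ε/3)∩X ⊆ B^m_d(x_0,ε). -/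
open Metric Filter Set

lemma mem_chainBall_of_dist {X : Type*} [PseudoMetricSpace X] {x z : X} {ε : ℝ}
    (h : dist z x < ε) : ∀ m : ℕ, z ∈ chainBall x ε m
  | 0 => h
  | m + 1 => by
    simp only [chainBall, Set.mem_iUnion]
    exact ⟨z, mem_chainBall_of_dist h m, by simp [Metric.mem_ball, lt_of_le_of_lt dist_nonneg h]⟩

lemma completion_key {X : Type*} [MetricSpace X] {ε : ℝ}
    {y : UniformSpace.Completion X} {x₀ : X}
    (hx₀ : dist (x₀ : UniformSpace.Completion X) y < ε / 3) :
    ∀ m : ℕ, ∀ x : X, ∀ z : UniformSpace.Completion X,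
      z ∈ chainBall y (ε / 3) m → dist (↑x : UniformSpace.Completion X) z < ε / 3 →
        x ∈ chainBall x₀ ε m := by
  intro m
  induction m with
  | zero =>
    intro x z hz hxz
    have : dist (↑x : UniformSpace.Completion X) ↑x₀ < ε := by
      calc dist (↑x : UniformSpace.Completion X) ↑x₀
          ≤ dist (↑x : UniformSpace.Completion X) z + dist z y + dist (y) (↑x₀ : UniformSpace.Completion X) :=
            dist_triangle4 _ _ _ _
        _ < ε / 3 + ε / 3 + ε / 3 := by
            have h1 : dist z y < ε / 3 := hz
            have h2 : dist y (↑x₀ : UniformSpace.Completion X) < ε / 3 := by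
              rwa [dist_comm] at hx₀
            linarith
        _ = ε := by ring
    rwa [UniformSpace.Completion.dist_eq] at this
  | succ m ih =>
    intro x z hz hxz
    simp only [chainBall, Set.mem_iUnion] at hz
    obtain ⟨w, hw, hzw⟩ := hz
    have hεpos : 0 < ε / 3 := lt_of_le_of_lt dist_nonneg hxz
    obtain ⟨x', hx'⟩ := Metric.denseRange_iff.mp
      (UniformSpace.Completion.denseRange_coe (α := X)) w (ε / 3) hεpos
    have hx'm : x' ∈ chainBall x₀ ε m := ih x' w hw (by rwa [dist_comm] at hx')
    have hxx' : dist x x' < ε := by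
      have : dist (↑x : UniformSpace.Completion X) ↑x' < ε := by
        calc dist (↑x : UniformSpace.Completion X) ↑x'
            ≤ dist (↑x : UniformSpace.Completion X) z + dist z w + dist w (↑x' : UniformSpace.Completion X) :=
              dist_triangle4 _ _ _ _
          _ < ε / 3 + ε / 3 + ε / 3 := by
              have h2 : dist z w < ε / 3 := hzw
              have h3 : dist w (↑x' : UniformSpace.Completion X) < ε / 3 := by
                exact hx'
              linarith
          _ = ε := by ring
      rwa [UniformSpace.Completion.dist_eq] at this
    simp only [chainBall, Set.mem_iUnion]
    exact ⟨x', hx'm, hxx'⟩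

/-- In the completion of a metric space, every chain-ball of radius `ε/3` meets `X`
and its trace on `X` is contained in a chain-ball of radius `ε` centered in `X`. -/
theorem completion_chainBall (X : Type*) [MetricSpace X] :
    ∀ ε > (0 : ℝ), ∀ y : UniformSpace.Completion X, ∀ m : ℕ,
      (((↑·) : X → UniformSpace.Completion X) ⁻¹' chainBall y (ε / 3) m).Nonempty ∧
      ∃ x₀ : X,
        (((↑·) : X → UniformSpace.Completion X) ⁻¹' chainBall y (ε / 3) m) ⊆
          chainBall x₀ ε m := by
  intro ε hε y m
  obtain ⟨x₀, hx₀⟩ := Metric.denseRange_iff.mp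
    (UniformSpace.Completion.denseRange_coe (α := X)) y (ε / 3) (by linarith)
  have hx₀' : dist (↑x₀ : UniformSpace.Completion X) y < ε / 3 := by rwa [dist_comm] at hx₀
  refine ⟨⟨x₀, mem_chainBall_of_dist hx₀' m⟩, x₀, ?_⟩
  intro x hx
  exact completion_key hx₀' m x ↑x hx (by simp; linarith)
end

section
/- For a metric space (X,d), the completion of (X,d) is Bourbaki-complete if and only if every Bourbaki-Cauchy sequence of (X,d) has a Cauchy subsequence. -/
/-!
An isometric embedding `f : X → Y` carries chain balls of `X` into chain balls of `Y`, so it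
maps Bourbaki-Cauchy sequences to Bourbaki-Cauchy sequences. If `f` has dense range, the links
of a chain in `Y` can be shadowed by points of `X`, so points of `X` close to a chain ball of `Y`
lie in a slightly larger chain ball of `X`; hence every Bourbaki-Cauchy sequence of `Y` is
shadowed by a Bourbaki-Cauchy sequence of `X`. A Cauchy subsequence of the shadow converges in
the complete space `Y`, and its limit is a cluster point of the original sequence. Conversely, a
convergent subsequence of the image of a sequence of `X` is Cauchy, and so is its preimage.
-/

open Metric Filter Set

open Topology

lemma chainBall_mono_s15 {X : Type*} [PseudoMetricSpace X] {p : X} {ε₁ ε₂ : ℝ} (h : ε₁ ≤ ε₂) :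
    ∀ m, chainBall p ε₁ m ⊆ chainBall p ε₂ m
  | 0 => ball_subset_ball h
  | m + 1 => by
    simp only [chainBall, iUnion_subset_iff]
    intro y hy
    exact (ball_subset_ball h).trans (subset_biUnion_of_mem (u := fun y => ball y ε₂)
      (chainBall_mono_s15 h m hy))

lemma DenseRange.exists_seq_tendsto_dist {X Y : Type*} [PseudoMetricSpace Y] {f : X → Y}
    (hd : DenseRange f) (v : ℕ → Y) :
    ∃ u : ℕ → X, Tendsto (fun n => dist (f (u n)) (v n)) atTop (𝓝 0) := by
  choose u hu using fun n : ℕ => hd.exists_dist_lt (v n) (Nat.one_div_pos_of_nat (n := n))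
  refine ⟨u, squeeze_zero (fun _ => dist_nonneg) (fun n => ?_)
    tendsto_one_div_add_atTop_nhds_zero_nat⟩
  rw [dist_comm]
  exact (hu n).le

namespace Isometry

variable {X Y : Type*} [PseudoMetricSpace X] [PseudoMetricSpace Y] {f : X → Y}

lemma mapsTo_chainBall (hf : Isometry f) (p : X) (ε : ℝ) :
    ∀ m, MapsTo f (chainBall p ε m) (chainBall (f p) ε m)
  | 0 => fun x hx => by simpa [chainBall, hf.dist_eq] using hx
  | m + 1 => by
    intro x hx
    simp only [chainBall, mem_iUnion, mem_ball] at hx ⊢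
    obtain ⟨y, hy, hxy⟩ := hx
    exact ⟨f y, mapsTo_chainBall hf p ε m hy, by rwa [hf.dist_eq]⟩

lemma bourbakiCauchySeq_comp (hf : Isometry f) {u : ℕ → X} (hu : BourbakiCauchySeq u) :
    BourbakiCauchySeq (f ∘ u) := by
  intro ε hε
  obtain ⟨m, n₀, p, hp⟩ := hu ε hε
  exact ⟨m, n₀, f p, fun n hn => hf.mapsTo_chainBall p ε m (hp n hn)⟩

lemma mem_chainBall_of_dist_lt (hf : Isometry f) (hd : DenseRange f) {ε δ : ℝ} (hδ : 0 < δ)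
    {p : X} {q : Y} (hp : dist (f p) q < δ) :
    ∀ m, ∀ v ∈ chainBall q ε m, ∀ x : X, dist (f x) v < δ → x ∈ chainBall p (ε + 2 * δ) m := by
  have key : ∀ (x y : X) (v w : Y), dist (f x) v < δ → dist v w < ε → dist w (f y) < δ →
      dist x y < ε + 2 * δ := fun x y v w hxv hvw hwy =>
    calc dist x y = dist (f x) (f y) := (hf.dist_eq x y).symm
      _ ≤ dist (f x) v + dist v w + dist w (f y) := dist_triangle4 _ _ _ _
      _ < ε + 2 * δ := by linarith
  intro m
  induction m with
  | zero =>
    intro v hv x hx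
    exact key x p v q hx hv (by rwa [dist_comm])
  | succ m ih =>
    intro v hv x hx
    simp only [chainBall, mem_iUnion] at hv ⊢
    obtain ⟨w, hw, hvw⟩ := hv
    obtain ⟨y, hy⟩ := hd.exists_dist_lt w hδ
    exact ⟨y, ih w hw y (by rwa [dist_comm]), key x y v w hx hvw hy⟩

lemma bourbakiCauchySeq_of_tendsto_dist (hf : Isometry f) (hd : DenseRange f) {u : ℕ → X}
    {v : ℕ → Y} (hv : BourbakiCauchySeq v)
    (huv : Tendsto (fun n => dist (f (u n)) (v n)) atTop (𝓝 0)) : BourbakiCauchySeq u := by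
  intro ε hε
  have hε4 : 0 < ε / 4 := by positivity
  obtain ⟨m, n₀, q, hq⟩ := hv (ε / 4) hε4
  obtain ⟨p, hp⟩ := hd.exists_dist_lt q hε4
  obtain ⟨N, hN⟩ := eventually_atTop.mp (huv.eventually (gt_mem_nhds hε4))
  refine ⟨m, max n₀ N, p, fun n hn => ?_⟩
  have hmem := hf.mem_chainBall_of_dist_lt hd hε4 (by rwa [dist_comm]) m (v n)
    (hq n (le_of_max_le_left hn)) (u n) (hN n (le_of_max_le_right hn))
  exact chainBall_mono_s15 (by linarith) m hmem

lemma exists_cauchySeq_subseq_of_isBourbakiComplete (hf : Isometry f)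
    (hY : IsBourbakiComplete Y) {u : ℕ → X} (hu : BourbakiCauchySeq u) :
    ∃ φ : ℕ → ℕ, StrictMono φ ∧ CauchySeq (u ∘ φ) := by
  obtain ⟨y, hy⟩ := hY _ (hf.bourbakiCauchySeq_comp hu)
  obtain ⟨φ, hφ, hlim⟩ := hy.tendsto_subseq
  exact ⟨φ, hφ, hf.isUniformInducing.cauchy_map_iff.mp hlim.cauchySeq⟩

lemma isBourbakiComplete_of_exists_cauchySeq_subseq [CompleteSpace Y] (hf : Isometry f)
    (hd : DenseRange f)
    (hX : ∀ u : ℕ → X, BourbakiCauchySeq u → ∃ φ : ℕ → ℕ, StrictMono φ ∧ CauchySeq (u ∘ φ)) :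
    IsBourbakiComplete Y := by
  intro v hv
  obtain ⟨u, huv⟩ := hd.exists_seq_tendsto_dist v
  obtain ⟨φ, hφ, hcauchy⟩ := hX u (hf.bourbakiCauchySeq_of_tendsto_dist hd hv huv)
  obtain ⟨y, hy⟩ := cauchySeq_tendsto_of_complete (hf.uniformContinuous.comp_cauchySeq hcauchy)
  have hvφ : Tendsto (v ∘ φ) atTop (𝓝 y) :=
    tendsto_of_tendsto_of_dist hy (huv.comp hφ.tendsto_atTop)
  exact ⟨y, hvφ.mapClusterPt.of_comp hφ.tendsto_atTop⟩

end Isometry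

/-- The completion of a metric space is Bourbaki-complete iff every Bourbaki-Cauchy
sequence of the space has a Cauchy subsequence. -/
theorem completion_bourbakiComplete_iff_cauchy_subseq (X : Type*) [MetricSpace X] :
    IsBourbakiComplete (UniformSpace.Completion X) ↔
      ∀ u : ℕ → X, BourbakiCauchySeq u →
        ∃ φ : ℕ → ℕ, StrictMono φ ∧ CauchySeq (u ∘ φ) :=
  ⟨fun h _ => UniformSpace.Completion.coe_isometry.exists_cauchySeq_subseq_of_isBourbakiComplete h,
    UniformSpace.Completion.coe_isometry.isBourbakiComplete_of_exists_cauchySeq_subseq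
      UniformSpace.Completion.denseRange_coe⟩
end

section
/- Let (X,μ) be a uniform space and B⊆X. Then B is totally bounded if and only if for every point-finite uniform open cover 𝒰 of X there exists a finite subfamily of 𝒰 covering B. -/
/-!
A totally bounded set is covered by finitely many balls of any entourage, hence by finitely many
members of any uniform cover. Conversely, if `B` is not totally bounded it contains a sequence
`x` that is `V`-separated for some entourage `V`. Choose open symmetric entourages with
`W ○ W ⊆ D` and `D ○ D ⊆ V`. The `D`-balls around the `x n` are pairwise disjoint and each
contains only its own centre; together with the open set `(closure (range x))ᶜ` they form a
point-finite open cover, which is uniform with entourage `W`: an open `W`-ball that meets the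
closure of `range x` meets `range x` itself. A finite subfamily then covers only finitely many
`x n`, so it does not cover `B`.
-/

open Set Uniformity UniformSpace
open scoped SetRel

theorem not_range_subset_sUnion_of_subsingleton {ι α : Type*} [Infinite ι] {x : ι → α}
    {s : Set (Set α)} (hs : s.Finite)
    (hx : ∀ A ∈ s, {i | x i ∈ A}.Subsingleton) : ¬range x ⊆ ⋃₀ s := by
  intro hcov
  have hfin : {i | x i ∈ ⋃₀ s}.Finite := by
    have hunion : {i | x i ∈ ⋃₀ s} = ⋃ A ∈ s, {i | x i ∈ A} := by ext; simp
    exact hunion ▸ hs.biUnion fun A hA => (hx A hA).finite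
  exact infinite_univ (hfin.subset fun i _ => hcov (mem_range_self i))

section

variable {X ι : Type*} [UniformSpace X]

theorem TotallyBounded.exists_finite_subset_sUnion_of_isUniformCover {B : Set X}
    (hB : TotallyBounded B) {U : Set (Set X)} (hU : IsUniformCover U) :
    ∃ s ⊆ U, s.Finite ∧ B ⊆ ⋃₀ s := by
  obtain ⟨V, hV, hball⟩ := hU
  choose f hfU hf using hball
  obtain ⟨T, hT, _, hTV⟩ := symm_of_uniformity hV
  obtain ⟨t, ht, hBt⟩ := hB T hT
  refine ⟨f '' t, image_subset_iff.2 fun y _ => hfU y, ht.image f, fun z hz => ?_⟩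
  obtain ⟨y, hy, hzy⟩ := mem_iUnion₂.1 (hBt hz)
  exact ⟨f y, mem_image_of_mem f hy, hf y (hTV (mem_ball_symmetry.1 hzy))⟩

theorem exists_seq_pairwise_notMem_of_not_totallyBounded {B : Set X}
    (hB : ¬TotallyBounded B) :
    ∃ V ∈ 𝓤 X, ∃ x : ℕ → X, (∀ n, x n ∈ B) ∧ Pairwise fun m n => (x m, x n) ∉ V := by
  obtain ⟨d, hd, hcov⟩ : ∃ d ∈ 𝓤 X, ∀ t : Set X, t.Finite → ∃ z ∈ B, ∀ y ∈ t, (z, y) ∉ d := by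
    simpa [TotallyBounded, not_subset] using hB
  obtain ⟨x, hx⟩ := seq_of_forall_finite_exists fun t ht => hcov t ht
  refine ⟨SetRel.symmetrize d, symmetrize_mem_uniformity hd, x, fun n => (hx n).1,
    fun m n hmn hmem => ?_⟩
  rcases hmn.lt_or_gt with h | h
  · exact (hx n).2 _ (mem_image_of_mem x h) hmem.2
  · exact (hx m).2 _ (mem_image_of_mem x h) hmem.1

def ballCover (x : ι → X) (D : SetRel X X) : Set (Set X) :=
  range (fun i => ball (x i) D) ∪ {(closure (range x))ᶜ}

namespace ballCover

variable {x : ι → X} {D : SetRel X X}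

theorem isOpen (hD : IsOpen D) : ∀ A ∈ ballCover x D, IsOpen A := by
  rintro _ (⟨i, rfl⟩ | rfl)
  · exact isOpen_ball _ hD
  · exact isClosed_closure.isOpen_compl

theorem isUniformCover {W : SetRel X X} (hW : W ∈ 𝓤 X) (hWo : IsOpen W) [W.IsSymm]
    (hWD : W ○ W ⊆ D) : IsUniformCover (ballCover x D) := by
  refine ⟨W, hW, fun z => ?_⟩
  by_cases hdisj : Disjoint (ball z W) (range x)
  · exact ⟨_, Or.inr rfl, subset_compl_iff_disjoint_right.2
      (hdisj.closure_right (isOpen_ball z hWo))⟩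
  · obtain ⟨_, hzi, i, rfl⟩ := not_disjoint_iff_nonempty_inter.1 hdisj
    exact ⟨_, Or.inl ⟨i, rfl⟩, fun w hw => hWD (mem_ball_comp (mem_ball_symmetry.1 hzi) hw)⟩

theorem finite_setOf_mem [D.IsSymm] (hx : Pairwise fun i j => (x i, x j) ∉ D ○ D) (z : X) :
    {A ∈ ballCover x D | z ∈ A}.Finite := by
  have hballs : {A ∈ range (fun i => ball (x i) D) | z ∈ A}.Subsingleton := by
    rintro _ ⟨⟨i, rfl⟩, hi⟩ _ ⟨⟨j, rfl⟩, hj⟩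
    rw [hx.eq (not_not.2 (mem_ball_comp hi (mem_ball_symmetry.1 hj)))]
  refine (hballs.finite.union (finite_singleton (closure (range x))ᶜ)).subset ?_
  rintro A ⟨hA | hA, hzA⟩
  exacts [Or.inl ⟨hA, hzA⟩, Or.inr hA]

theorem subsingleton_setOf_mem (hx : Pairwise fun i j => (x i, x j) ∉ D) :
    ∀ A ∈ ballCover x D, {i | x i ∈ A}.Subsingleton := by
  rintro _ (⟨k, rfl⟩ | rfl)
  · have hk : {i | x i ∈ ball (x k) D} ⊆ {k} := fun i hi => (hx.eq (not_not.2 hi)).symm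
    exact subsingleton_singleton.anti hk
  · have hnone : {i | x i ∈ (closure (range x))ᶜ} = ∅ :=
      eq_empty_of_forall_notMem fun i hi => hi (subset_closure (mem_range_self i))
    exact hnone ▸ subsingleton_empty

end ballCover

theorem exists_pointFinite_isUniformCover_of_pairwise_notMem {V : SetRel X X} (hV : V ∈ 𝓤 X)
    {x : ι → X} (hx : Pairwise fun i j => (x i, x j) ∉ V) :
    ∃ G : Set (Set X), IsUniformCover G ∧ (∀ A ∈ G, IsOpen A) ∧
      (∀ z, {A ∈ G | z ∈ A}.Finite) ∧ ∀ A ∈ G, {i | x i ∈ A}.Subsingleton := by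
  obtain ⟨D, hD, hDo, _, hDV⟩ := comp_open_symm_mem_uniformity_sets hV
  obtain ⟨W, hW, hWo, _, hWD⟩ := comp_open_symm_mem_uniformity_sets hD
  have hxDD : Pairwise fun i j => (x i, x j) ∉ D ○ D := hx.mono fun _ _ h hij => h (hDV hij)
  have hxD : Pairwise fun i j => (x i, x j) ∉ D :=
    hxDD.mono fun _ _ h hij => h (subset_comp_self_of_mem_uniformity hD hij)
  exact ⟨ballCover x D, ballCover.isUniformCover hW hWo hWD, ballCover.isOpen hDo,
    ballCover.finite_setOf_mem hxDD, ballCover.subsingleton_setOf_mem hxD⟩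

end

/-- A subset of a uniform space is totally bounded iff every point-finite uniform open
cover of the space contains a finite subfamily covering it. -/
theorem totallyBounded_iff_pointFinite (X : Type*) [UniformSpace X] (B : Set X) :
    TotallyBounded B ↔
      ∀ U : Set (Set X), IsUniformCover U → (∀ W ∈ U, IsOpen W) →
        (∀ x : X, {W ∈ U | x ∈ W}.Finite) →
        ∃ s ⊆ U, s.Finite ∧ B ⊆ ⋃₀ s := by
  refine ⟨fun hB U hU _ _ => hB.exists_finite_subset_sUnion_of_isUniformCover hU, fun h => ?_⟩
  by_contra hB
  obtain ⟨V, hV, x, hxB, hx⟩ := exists_seq_pairwise_notMem_of_not_totallyBounded hB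
  obtain ⟨G, hG, hGopen, hGfin, hGsub⟩ := exists_pointFinite_isUniformCover_of_pairwise_notMem hV hx
  obtain ⟨s, hsG, hs, hBs⟩ := h G hG hGopen hGfin
  exact not_range_subset_sUnion_of_subsingleton hs (fun A hA => hGsub A (hsG hA))
    ((range_subset_iff.2 hxB).trans hBs)
end

section
/- The metric hedgehog H(κ) with κ≥ω_0 spines is a Bourbaki-bounded, complete metric space that is not totally bounded; in particular, for infinite κ it is complete but not Bourbaki-complete. -/
open Metric Filter Set

/-- The metric hedgehog with spine set `A`, realized isometrically inside
`ℓ¹(A)` as the segments `[0,1] • (single α)`: the distance between `x • e α`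
and `y • e β` is `|x - y|` if `α = β` and `x + y` otherwise. -/
noncomputable def Hedgehog (A : Type) [DecidableEq A] : Set (lp (fun _ : A => ℝ) 1) :=
  {f | ∃ (α : A) (x : ℝ), x ∈ Set.Icc (0 : ℝ) 1 ∧ f = lp.single 1 α x}

/-! Each point of a spine is joined to the centre by a chain of `ε/2`-steps along its spine, so
the centre alone witnesses Bourbaki-boundedness and every sequence is Bourbaki-Cauchy. The
hedgehog is closed in `ℓ¹(A)`, being the set of nonnegative vectors of norm at most one with at
most one nonzero coordinate, hence complete. The tips of the spines are pairwise at distance `2`,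
so it is not totally bounded; and Bourbaki-completeness would give every sequence a cluster point,
making it compact. -/

section ChainBall

variable {X : Type*} [PseudoMetricSpace X]

theorem mem_chainBall_of_dist_succ_lt {ε : ℝ} (f : ℕ → X) (hf : ∀ i, dist (f (i + 1)) (f i) < ε) :
    ∀ m, f (m + 1) ∈ chainBall (f 0) ε m
  | 0 => hf 0
  | m + 1 => mem_iUnion₂.2 ⟨f (m + 1), mem_chainBall_of_dist_succ_lt f hf m, hf (m + 1)⟩

theorem isBourbakiBounded_univ_of_forall_mem_chainBall
    (h : ∀ ε > (0 : ℝ), ∃ m : ℕ, ∃ p : X, ∀ x, x ∈ chainBall p ε m) :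
    IsBourbakiBounded (univ : Set X) := fun ε hε =>
  let ⟨m, p, hp⟩ := h ε hε
  ⟨m, {p}, fun x _ => by simpa using hp x⟩

theorem bourbakiCauchySeq_of_forall_mem_chainBall
    (h : ∀ ε > (0 : ℝ), ∃ m : ℕ, ∃ p : X, ∀ x, x ∈ chainBall p ε m) (u : ℕ → X) :
    BourbakiCauchySeq u := fun ε hε =>
  let ⟨m, p, hp⟩ := h ε hε
  ⟨m, 0, p, fun n _ => hp (u n)⟩

theorem IsBourbakiComplete.compactSpace (h : IsBourbakiComplete X)
    (hu : ∀ u : ℕ → X, BourbakiCauchySeq u) : CompactSpace X := by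
  refine compactSpace_iff_seqCompactSpace.2 ⟨fun u _ => ?_⟩
  obtain ⟨x, hx⟩ := h u (hu u)
  exact ⟨x, mem_univ x, hx.tendsto_subseq⟩

end ChainBall

theorem not_totallyBounded_range_of_pairwise_le_dist {X ι : Type*} [PseudoMetricSpace X]
    [Infinite ι] {f : ι → X} {δ : ℝ} (hδ : 0 < δ) (hf : Pairwise fun i j => δ ≤ dist (f i) (f j)) :
    ¬ TotallyBounded (range f) := by
  intro htb
  obtain ⟨t, ht, hcov⟩ := totallyBounded_iff.1 htb (δ / 2) (half_pos hδ)
  have hnear : ∀ i, ∃ y : t, f i ∈ ball (y : X) (δ / 2) := fun i => by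
    simpa using hcov (mem_range_self i)
  choose y hy using hnear
  have := ht.to_subtype
  obtain ⟨i, j, hij, hyij⟩ := Finite.exists_ne_map_eq_of_infinite y
  have hi := mem_ball.1 (hy i)
  have hj := mem_ball.1 (hy j)
  rw [hyij] at hi
  refine (hf hij).not_gt ?_
  calc dist (f i) (f j) ≤ dist (f i) (y j) + dist (f j) (y j) := dist_triangle_right ..
    _ < δ / 2 + δ / 2 := add_lt_add hi hj
    _ = δ := add_halves δ

theorem lp.dist_single_single_of_ne {α : Type*} [DecidableEq α] {E : α → Type*}
    [∀ i, NormedAddCommGroup (E i)] {i j : α} (hij : i ≠ j) (a : E i) (b : E j) :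
    dist (lp.single 1 i a : lp E 1) (lp.single 1 j b) = ‖a‖ + ‖b‖ := by
  let f : ∀ k, E k := Function.update (Pi.single j (-b)) i a
  have hfi : f i = a := by simp [f]
  have hfj : f j = -b := by simp [f, hij.symm]
  have key := lp.norm_sum_single (p := 1) (by norm_num) f {i, j}
  simp only [Finset.sum_pair hij, hfi, hfj, lp.single_neg, ENNReal.toReal_one, Real.rpow_one,
    ← sub_eq_add_neg] at key
  simpa [dist_eq_norm] using key

namespace Hedgehog

variable {A : Type} [DecidableEq A]

noncomputable def point (α : A) (x : ℝ) (hx : x ∈ Icc (0 : ℝ) 1) : Hedgehog A :=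
  ⟨lp.single 1 α x, α, x, hx, rfl⟩

theorem exists_eq_point (z : Hedgehog A) : ∃ α x hx, z = point α x hx := by
  obtain ⟨_, α, x, hx, rfl⟩ := z
  exact ⟨α, x, hx, rfl⟩

theorem dist_point_point (α : A) {x y : ℝ} (hx : x ∈ Icc (0 : ℝ) 1) (hy : y ∈ Icc (0 : ℝ) 1) :
    dist (point α x hx) (point α y hy) = |x - y| := by
  rw [Subtype.dist_eq, point, point, (lp.isometry_single α).dist_eq, Real.dist_eq]

theorem dist_point_point_of_ne {α β : A} (h : α ≠ β) {x y : ℝ} (hx : x ∈ Icc (0 : ℝ) 1)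
    (hy : y ∈ Icc (0 : ℝ) 1) : dist (point α x hx) (point β y hy) = x + y := by
  rw [Subtype.dist_eq, point, point, lp.dist_single_single_of_ne h, Real.norm_of_nonneg hx.1,
    Real.norm_of_nonneg hy.1]

noncomputable def center [Nonempty A] : Hedgehog A :=
  point (Classical.arbitrary A) 0 (left_mem_Icc.2 zero_le_one)

theorem point_zero [Nonempty A] (α : A) (h : (0 : ℝ) ∈ Icc (0 : ℝ) 1) : point α 0 h = center :=
  Subtype.ext <| (lp.single_zero _ _).trans (lp.single_zero _ _).symm

theorem exists_forall_mem_chainBall_center [Nonempty A] {ε : ℝ} (hε : 0 < ε) :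
    ∃ m : ℕ, ∀ z : Hedgehog A, z ∈ chainBall center ε m := by
  refine ⟨⌈2 / ε⌉₊, fun z => ?_⟩
  obtain ⟨α, x, hx, rfl⟩ := exists_eq_point z
  let f (i : ℕ) : Hedgehog A := point α (min (i * (ε / 2)) x)
    ⟨le_min (by positivity) hx.1, (min_le_right _ _).trans hx.2⟩
  have hf0 : f 0 = center := by
    simp only [f, CharP.cast_eq_zero, zero_mul, min_eq_left hx.1, point_zero]
  have hflast : f (⌈2 / ε⌉₊ + 1) = point α x hx := by
    have : x ≤ ((⌈2 / ε⌉₊ + 1 : ℕ) : ℝ) * (ε / 2) := by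
      have := Nat.le_ceil (2 / ε)
      push_cast
      calc x ≤ 2 / ε * (ε / 2) := by field_simp; exact hx.2
        _ ≤ _ := by gcongr; linarith
    simp only [f, min_eq_right this]
  have hstep (i : ℕ) : dist (f (i + 1)) (f i) < ε := by
    calc dist (f (i + 1)) (f i) = |min ((i + 1 : ℕ) * (ε / 2)) x - min (i * (ε / 2)) x| :=
          dist_point_point ..
      _ ≤ |((i + 1 : ℕ) : ℝ) * (ε / 2) - i * (ε / 2)| := by
          simpa using abs_min_sub_min_le_max (((i + 1 : ℕ) : ℝ) * (ε / 2)) x (i * (ε / 2)) x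
      _ < ε := by push_cast; rw [abs_of_pos] <;> linarith
  exact hflast ▸ hf0 ▸ mem_chainBall_of_dist_succ_lt f hstep _

theorem eq_setOf [Nonempty A] :
    Hedgehog A = {f | (∀ i, 0 ≤ f i) ∧ (∀ i j, i ≠ j → f i * f j = 0) ∧ ‖f‖ ≤ 1} := by
  ext f
  constructor
  · rintro ⟨α, x, hx, rfl⟩
    refine ⟨fun i => ?_, fun i j hij => ?_, ?_⟩
    · rw [lp.single_apply, Pi.single_apply]
      split_ifs
      exacts [hx.1, le_rfl]
    · rcases eq_or_ne i α with rfl | hi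
      · rw [lp.single_apply_ne _ _ _ hij.symm, mul_zero]
      · rw [lp.single_apply_ne _ _ _ hi, zero_mul]
    · rw [lp.norm_single zero_lt_one, Real.norm_of_nonneg hx.1]
      exact hx.2
  · rintro ⟨hnonneg, hmul, hnorm⟩
    by_cases hf : ∀ i, f i = 0
    · exact ⟨Classical.arbitrary A, 0, left_mem_Icc.2 zero_le_one, by ext i; simp [hf i]⟩
    obtain ⟨α, hα⟩ := not_forall.1 hf
    refine ⟨α, f α, ⟨hnonneg α, ?_⟩, ?_⟩
    · exact (Real.le_norm_self _).trans ((lp.norm_apply_le_norm one_ne_zero f α).trans hnorm)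
    · ext j
      rcases eq_or_ne j α with rfl | hj
      · simp
      · simpa [hj] using (mul_eq_zero.1 (hmul α j hj.symm)).resolve_left hα

theorem isClosed [Nonempty A] : IsClosed (Hedgehog A) := by
  have hcont (i : A) : Continuous fun f : lp (fun _ : A => ℝ) 1 => f i :=
    (lp.lipschitzWith_one_eval 1 i).continuous
  rw [eq_setOf]
  simp only [ofPred_and, ofPred_forall]
  refine .inter (isClosed_iInter fun i => isClosed_le continuous_const (hcont i))
    (.inter (isClosed_iInter fun i => isClosed_iInter fun j => isClosed_iInter fun _ =>
      isClosed_eq ((hcont i).mul (hcont j)) continuous_const)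
      (isClosed_le continuous_norm continuous_const))

noncomputable def tip (α : A) : Hedgehog A :=
  point α 1 (right_mem_Icc.2 zero_le_one)

theorem not_totallyBounded_range_tip [Infinite A] : ¬ TotallyBounded (range (tip (A := A))) :=
  not_totallyBounded_range_of_pairwise_le_dist two_pos fun _ _ h =>
    (by norm_num : (2 : ℝ) ≤ 1 + 1).trans (dist_point_point_of_ne h _ _).ge

end Hedgehog

/-- The metric hedgehog with infinitely many spines is a Bourbaki-bounded complete
metric space that is not totally bounded; in particular it is complete but not
Bourbaki-complete. -/
theorem hedgehog_properties (A : Type) [DecidableEq A] [Infinite A] :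
    IsBourbakiBounded (Set.univ : Set ↥(Hedgehog A)) ∧
    CompleteSpace ↥(Hedgehog A) ∧
    ¬ TotallyBounded (Set.univ : Set ↥(Hedgehog A)) ∧
    ¬ IsBourbakiComplete ↥(Hedgehog A) := by
  have hchain : ∀ ε > (0 : ℝ), ∃ m : ℕ, ∃ p : Hedgehog A, ∀ z, z ∈ chainBall p ε m :=
    fun _ hε => let ⟨m, hm⟩ := Hedgehog.exists_forall_mem_chainBall_center hε; ⟨m, _, hm⟩
  have hnotTB : ¬ TotallyBounded (univ : Set (Hedgehog A)) := fun h =>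
    Hedgehog.not_totallyBounded_range_tip (h.subset (subset_univ _))
  refine ⟨isBourbakiBounded_univ_of_forall_mem_chainBall hchain,
    Hedgehog.isClosed.completeSpace_coe, hnotTB, fun hcomplete => hnotTB ?_⟩
  have := hcomplete.compactSpace (bourbakiCauchySeq_of_forall_mem_chainBall hchain)
  exact isCompact_univ.totallyBounded
end
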